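/- arXiv:1512.02074 — 4 statements merged into one kernel-verified Lean document; each statement's English description precedes it below -/
import Mathlib

section
/- Let Z_A, X_A be self-adjoint unitaries on H_A, and Z_B, X_B self-adjoint unitaries on H_B, and let ψ ∈ H_A ⊗ H_B be a unit vector. If ⟨ψ| [Z_A ⊗ (X_B + Z_B) + X_A ⊗ (X_B − Z_B)] |ψ⟩ = 2√2 (the maximal quantum value of CHSH), then X_A Z_A ψ = − Z_A X_A ψ. -/
open scoped InnerProductSpace

/-!
Write `C₁ = X_B + Z_B` and `C₂ = X_B - Z_B`. The sum-of-squares identity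
`(C₁ - √2 Z_A)² + (C₂ - √2 X_A)² = 8 - 2√2 · CHSH` shows that attaining `2√2` forces
`C₁ ψ = √2 Z_A ψ` and `C₂ ψ = √2 X_A ψ`. As `C₁` and `C₂` anticommute, while `X_A` commutes
with `C₁` and `Z_A` with `C₂`, this gives `2 X_A Z_A ψ = C₁ C₂ ψ = -C₂ C₁ ψ = -2 Z_A X_A ψ`.
-/

def chsh {R : Type*} [Ring R] (zA xA zB xB : R) : R := zA * (xB + zB) + xA * (xB - zB)

theorem chsh_sos {𝕜 R : Type*} [CommRing 𝕜] [Ring R] [Algebra 𝕜 R] {zA xA zB xB : R} {s : 𝕜}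
    (hs : s * s = 2) (hzA : zA * zA = 1) (hxA : xA * xA = 1) (hzB : zB * zB = 1)
    (hxB : xB * xB = 1) (hzz : Commute zA zB) (hzx : Commute zA xB) (hxz : Commute xA zB)
    (hxx : Commute xA xB) :
    (xB + zB - s • zA) * (xB + zB - s • zA) + (xB - zB - s • xA) * (xB - zB - s • xA)
      = 8 - (2 * s) • chsh zA xA zB xB := by
  simp only [chsh, mul_sub, sub_mul, mul_add, add_mul, smul_mul_assoc, mul_smul_comm, smul_smul,
    hs, hzA, hxA, hzB, hxB, ← hzz.eq, ← hzx.eq, ← hxz.eq, ← hxx.eq, smul_sub, smul_add]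
  rw [show (8 : R) = (8 : 𝕜) • 1 by rw [Algebra.smul_def, mul_one, map_ofNat]]
  module

theorem add_mul_sub_eq_neg_sub_mul_add {R : Type*} [Ring R] {a b : R} (h : a * a = b * b) :
    (a + b) * (a - b) = -((a - b) * (a + b)) := by
  rw [eq_neg_iff_add_eq_zero]
  simp only [mul_sub, sub_mul, mul_add, add_mul, h]
  abel

namespace ContinuousLinearMap

theorem apply_apply_eq_neg_of_apply_eq_smul {𝕜 E : Type*} [Field 𝕜]
    [AddCommGroup E] [Module 𝕜 E] [TopologicalSpace E] [IsTopologicalAddGroup E]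
    {a b c d : E →L[𝕜] E} {s : 𝕜} {x : E} (hs : s ≠ 0) (hcd : c * d = -(d * c))
    (hbc : Commute b c) (had : Commute a d) (hc : c x = s • a x) (hd : d x = s • b x) :
    b (a x) = -(a (b x)) := by
  have hcdx : c (d x) = (s * s) • b (a x) := by
    rw [hd, map_smul, ← mul_apply_eq_comp c b, ← hbc.eq, mul_apply_eq_comp, hc, map_smul,
      smul_smul]
  have hdcx : d (c x) = (s * s) • a (b x) := by
    rw [hc, map_smul, ← mul_apply_eq_comp d a, ← had.eq, mul_apply_eq_comp, hd, map_smul,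
      smul_smul]
  have := congrArg (fun T : E →L[𝕜] E => T x) hcd
  simp only [mul_apply_eq_comp, neg_apply, hcdx, hdcx, ← smul_neg] at this
  exact smul_right_injective E (mul_ne_zero hs hs) this

section InnerProductSpace

variable {𝕜 E : Type*} [RCLike 𝕜] [NormedAddCommGroup E] [InnerProductSpace 𝕜 E]
  [CompleteSpace E]

theorem apply_eq_zero_of_inner_star_mul_self_add_eq_zero {T₁ T₂ : E →L[𝕜] E} {x : E}
    (h : ⟪x, (star T₁ * T₁ + star T₂ * T₂) x⟫_𝕜 = 0) : T₁ x = 0 ∧ T₂ x = 0 := by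
  have hsum : ‖T₁ x‖ ^ 2 + ‖T₂ x‖ ^ 2 = 0 := by
    rw [apply_norm_sq_eq_inner_adjoint_right, apply_norm_sq_eq_inner_adjoint_right,
      ← map_add, ← inner_add_right]
    simpa [star_eq_adjoint] using congrArg RCLike.re h
  constructor <;> apply norm_eq_zero.mp <;> nlinarith [sq_nonneg ‖T₁ x‖, sq_nonneg ‖T₂ x‖]

theorem apply_eq_sqrt_two_smul_of_inner_chsh_eq {zA xA zB xB : E →L[𝕜] E}
    (hzA : IsSelfAdjoint zA) (hxA : IsSelfAdjoint xA) (hzB : IsSelfAdjoint zB)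
    (hxB : IsSelfAdjoint xB) (hzA2 : zA * zA = 1) (hxA2 : xA * xA = 1) (hzB2 : zB * zB = 1)
    (hxB2 : xB * xB = 1) (hzz : Commute zA zB) (hzx : Commute zA xB) (hxz : Commute xA zB)
    (hxx : Commute xA xB) {ψ : E} (hψ : ‖ψ‖ = 1)
    (h : ⟪ψ, chsh zA xA zB xB ψ⟫_𝕜 = ((2 * √2 : ℝ) : 𝕜)) :
    (xB + zB) ψ = ((√2 : ℝ) : 𝕜) • zA ψ ∧ (xB - zB) ψ = ((√2 : ℝ) : 𝕜) • xA ψ := by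
  set s : 𝕜 := ((√2 : ℝ) : 𝕜)
  have hs : s * s = 2 := by
    rw [← RCLike.ofReal_mul, Real.mul_self_sqrt zero_le_two, RCLike.ofReal_ofNat]
  have hs_sa : IsSelfAdjoint s := RCLike.conj_ofReal _
  have hT₁ : IsSelfAdjoint (xB + zB - s • zA) := (hxB.add hzB).sub (hs_sa.smul hzA)
  have hT₂ : IsSelfAdjoint (xB - zB - s • xA) := (hxB.sub hzB).sub (hs_sa.smul hxA)
  have h8 : ⟪ψ, (8 : E →L[𝕜] E) ψ⟫_𝕜 = 8 := by
    rw [ofNat_apply, ← ofNat_smul_eq_nsmul 𝕜, inner_smul_right,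
      inner_self_eq_one_of_norm_eq_one hψ, mul_one]
  have hzero : ⟪ψ, (star (xB + zB - s • zA) * (xB + zB - s • zA)
      + star (xB - zB - s • xA) * (xB - zB - s • xA)) ψ⟫_𝕜 = 0 := by
    rw [hT₁.star_eq, hT₂.star_eq, chsh_sos hs hzA2 hxA2 hzB2 hxB2 hzz hzx hxz hxx, sub_apply,
      inner_sub_right, smul_apply, inner_smul_right, h8, h, RCLike.ofReal_mul,
      RCLike.ofReal_ofNat]
    linear_combination (-4) * hs
  simpa only [sub_apply, smul_apply, sub_eq_zero] using
    apply_eq_zero_of_inner_star_mul_self_add_eq_zero hzero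

end InnerProductSpace

end ContinuousLinearMap

/-- Bipartite structure is modelled by commuting operators on a common Hilbert
space: operators `Z_A, X_A` ("Alice side", i.e. `O ⊗ 1`) commute with
`Z_B, X_B` ("Bob side", i.e. `1 ⊗ O`). If the CHSH operator attains the
Tsirelson value `2√2` on a unit vector `ψ`, then `X_A Z_A ψ = − Z_A X_A ψ`. -/
theorem stmt2 {H : Type*} [NormedAddCommGroup H] [InnerProductSpace ℂ H] [CompleteSpace H]
    (ZA XA ZB XB : H →L[ℂ] H)
    (hZAsa : ContinuousLinearMap.adjoint ZA = ZA) (hZA2 : ZA * ZA = 1)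
    (hXAsa : ContinuousLinearMap.adjoint XA = XA) (hXA2 : XA * XA = 1)
    (hZBsa : ContinuousLinearMap.adjoint ZB = ZB) (hZB2 : ZB * ZB = 1)
    (hXBsa : ContinuousLinearMap.adjoint XB = XB) (hXB2 : XB * XB = 1)
    (hc1 : Commute ZA ZB) (hc2 : Commute ZA XB)
    (hc3 : Commute XA ZB) (hc4 : Commute XA XB)
    (ψ : H) (hψ : ‖ψ‖ = 1)
    (hCHSH : ⟪ψ, (ZA * (XB + ZB) + XA * (XB - ZB)) ψ⟫_ℂ
        = ((2 * Real.sqrt 2 : ℝ) : ℂ)) :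
    XA (ZA ψ) = - (ZA (XA ψ)) := by
  open ContinuousLinearMap in
  obtain ⟨hC₁, hC₂⟩ := apply_eq_sqrt_two_smul_of_inner_chsh_eq
    (isSelfAdjoint_iff'.mpr hZAsa) (isSelfAdjoint_iff'.mpr hXAsa) (isSelfAdjoint_iff'.mpr hZBsa)
    (isSelfAdjoint_iff'.mpr hXBsa) hZA2 hXA2 hZB2 hXB2 hc1 hc2 hc3 hc4 hψ hCHSH
  have hs : ((√2 : ℝ) : ℂ) ≠ 0 := by simp
  exact ContinuousLinearMap.apply_apply_eq_neg_of_apply_eq_smul hs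
    (add_mul_sub_eq_neg_sub_mul_add (hXB2.trans hZB2.symm)) (hc4.add_right hc3)
    (hc2.sub_right hc1) hC₁ hC₂
end

section
/- Let ψ be a unit vector and A, B self-adjoint operators with operator norms at most 1 such that ⟨ψ| A ⊗ B |ψ⟩ ≥ 1 − ε with ε ≥ 0. Then ‖(A ⊗ 1)ψ − (1 ⊗ B)ψ‖ ≤ √(2ε). -/
open scoped InnerProductSpace

theorem norm_sub_le_sqrt_two_mul_one_sub_re_inner {𝕜 E : Type*} [RCLike 𝕜]
    [NormedAddCommGroup E] [InnerProductSpace 𝕜 E] {u v : E} (hu : ‖u‖ ≤ 1) (hv : ‖v‖ ≤ 1) :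
    ‖u - v‖ ≤ Real.sqrt (2 * (1 - RCLike.re ⟪u, v⟫_𝕜)) := by
  have hsq : ‖u - v‖ ^ 2 ≤ 2 * (1 - RCLike.re ⟪u, v⟫_𝕜) := by
    rw [@norm_sub_sq 𝕜]
    nlinarith [norm_nonneg u, norm_nonneg v]
  exact Real.le_sqrt_of_sq_le hsq

theorem ContinuousLinearMap.inner_apply_apply_of_adjoint_eq {𝕜 E : Type*} [RCLike 𝕜]
    [NormedAddCommGroup E] [InnerProductSpace 𝕜 E] [CompleteSpace E] {A : E →L[𝕜] E}
    (hA : ContinuousLinearMap.adjoint A = A) (B : E →L[𝕜] E) (x y : E) :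
    ⟪A x, B y⟫_𝕜 = ⟪x, (A * B) y⟫_𝕜 := by
  conv_lhs => rw [← hA]
  exact ContinuousLinearMap.adjoint_inner_left A (B y) x

theorem stmt8_general {H : Type*} [NormedAddCommGroup H] [InnerProductSpace ℂ H] [CompleteSpace H]
    (A B : H →L[ℂ] H)
    (hAsa : ContinuousLinearMap.adjoint A = A) (hAn : ‖A‖ ≤ 1)
    (hBn : ‖B‖ ≤ 1)
    (ψ : H) (hψ : ‖ψ‖ = 1) (ε : ℝ)
    (hcorr : (⟪ψ, (A * B) ψ⟫_ℂ).re ≥ 1 - ε) :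
    ‖A ψ - B ψ‖ ≤ Real.sqrt (2 * ε) := by
  have hAψ : ‖A ψ‖ ≤ 1 := by simpa [hψ] using A.le_of_opNorm_le hAn ψ
  have hBψ : ‖B ψ‖ ≤ 1 := by simpa [hψ] using B.le_of_opNorm_le hBn ψ
  have hinner : RCLike.re ⟪A ψ, B ψ⟫_ℂ ≥ 1 - ε := by
    rwa [A.inner_apply_apply_of_adjoint_eq hAsa]
  calc ‖A ψ - B ψ‖ ≤ Real.sqrt (2 * (1 - RCLike.re ⟪A ψ, B ψ⟫_ℂ)) :=
        norm_sub_le_sqrt_two_mul_one_sub_re_inner hAψ hBψ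
    _ ≤ Real.sqrt (2 * ε) := Real.sqrt_le_sqrt (by linarith)

/-- If `A` (Alice side) and `B` (Bob side) are commuting self-adjoint operators of
norm at most `1` (modelling `A ⊗ 1` and `1 ⊗ B`), `ψ` is a unit vector and
`⟨ψ|A⊗B|ψ⟩ ≥ 1 − ε`, then `‖(A⊗1)ψ − (1⊗B)ψ‖ ≤ √(2ε)`. -/
theorem stmt8 {H : Type*} [NormedAddCommGroup H] [InnerProductSpace ℂ H] [CompleteSpace H]
    (A B : H →L[ℂ] H)
    (hAsa : ContinuousLinearMap.adjoint A = A) (hAn : ‖A‖ ≤ 1)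
    (hBsa : ContinuousLinearMap.adjoint B = B) (hBn : ‖B‖ ≤ 1)
    (hAB : Commute A B)
    (ψ : H) (hψ : ‖ψ‖ = 1) (ε : ℝ) (hε : 0 ≤ ε)
    (hcorr : (⟪ψ, (A * B) ψ⟫_ℂ).re ≥ 1 - ε) :
    ‖A ψ - B ψ‖ ≤ Real.sqrt (2 * ε) :=
  stmt8_general A B hAsa hAn hBn ψ hψ ε hcorr
end

section
/- Let ψ be a unit vector in H_A ⊗ H_B. Suppose X₁, X₂, Z₁, Z₂, W₁, W₂ are self-adjoint unitaries acting on H_A and X₃, X₄, Z₃, Z₄, W₃, W₄ self-adjoint unitaries acting on H_B, with [X₁,X₂]=[Z₁,Z₂]=[W₁,W₂]=[Z₃,X₄]=[X₃,Z₄]=[W₃,W₄]=0, satisfying the nine magic-square correlation conditions ⟨ψ|Z₁X₃|ψ⟩, ⟨ψ|Z₂X₄|ψ⟩, ⟨ψ|X₁Z₃|ψ⟩, ⟨ψ|X₂Z₄|ψ⟩, ⟨ψ|Z₁Z₂W₃|ψ⟩, ⟨ψ|X₁X₂W₄|ψ⟩, ⟨ψ|W₁X₃Z₄|ψ⟩,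 ⟨ψ|W₂X₄Z₃|ψ⟩ ≥ 1 − ε and −⟨ψ|W₁W₂W₃W₄|ψ⟩ ≥ 1 − ε. Then ‖Z₁X₁ψ + X₁Z₁ψ‖ ≤ 9√(2ε). -/
open scoped InnerProductSpace

/-!
Every correlation condition says that an observable of one party and one of the other act on ψ
almost identically: two unit vectors with `re ⟪u, v⟫ ≥ 1 - ε` are `√(2ε)`-close. Since the two
parties' operators commute and are isometries, such substitutions can be made anywhere inside a
product applied to ψ. Nine of them lead from `X₂X₄Z₁X₁ψ` to `-X₂X₄X₁Z₁ψ`; the sign enters through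
the one condition with value `-1`, `W₁W₂ψ ≈ -W₃W₄ψ`.
-/

theorem mem_unitary_of_isSelfAdjoint_of_mul_self {R : Type*} [Monoid R] [StarMul R] {u : R}
    (hu : IsSelfAdjoint u) (h : u * u = 1) : u ∈ unitary R := by
  rw [Unitary.mem_iff, hu.star_eq]
  exact ⟨h, h⟩

theorem neg_mem_unitary {R : Type*} [Ring R] [StarRing R] {u : R} (hu : u ∈ unitary R) :
    -u ∈ unitary R := by
  simpa only [Unitary.mem_iff, star_neg, neg_mul_neg] using hu

theorem dist_le_sqrt_of_one_sub_le_re_inner {𝕜 E : Type*} [RCLike 𝕜] [NormedAddCommGroup E]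
    [InnerProductSpace 𝕜 E] {u v : E} (hu : ‖u‖ = 1) (hv : ‖v‖ = 1) {ε : ℝ}
    (h : 1 - ε ≤ RCLike.re ⟪u, v⟫_𝕜) : dist u v ≤ √(2 * ε) := by
  rw [dist_eq_norm, ← Real.sqrt_sq (norm_nonneg _)]
  gcongr
  rw [@norm_sub_sq 𝕜, hu, hv]
  linarith

section HilbertSpace

variable {H : Type*} [NormedAddCommGroup H] [InnerProductSpace ℂ H] [CompleteSpace H]

theorem isSelfAdjoint_and_mem_unitary {P : H →L[ℂ] H}
    (h : ContinuousLinearMap.adjoint P = P ∧ P * P = 1) :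
    IsSelfAdjoint P ∧ P ∈ unitary (H →L[ℂ] H) :=
  have hP := ContinuousLinearMap.isSelfAdjoint_iff'.2 h.1
  ⟨hP, mem_unitary_of_isSelfAdjoint_of_mul_self hP h.2⟩

theorem dist_map_of_mem_unitary {U : H →L[ℂ] H} (hU : U ∈ unitary (H →L[ℂ] H)) (x y : H) :
    dist (U x) (U y) = dist x y := by
  rw [dist_eq_norm, ← map_sub, ContinuousLinearMap.norm_map_of_mem_unitary hU, dist_eq_norm]

theorem dist_le_sqrt_of_one_sub_le_re_inner_mul {ψ : H} (hψ : ‖ψ‖ = 1) {ε : ℝ}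
    {A B : H →L[ℂ] H} (hA : IsSelfAdjoint A) (hAu : A ∈ unitary (H →L[ℂ] H))
    (hBu : B ∈ unitary (H →L[ℂ] H)) (h : 1 - ε ≤ (⟪ψ, (A * B) ψ⟫_ℂ).re) :
    dist (A ψ) (B ψ) ≤ √(2 * ε) := by
  refine dist_le_sqrt_of_one_sub_le_re_inner (𝕜 := ℂ)
    (by rw [ContinuousLinearMap.norm_map_of_mem_unitary hAu, hψ])
    (by rw [ContinuousLinearMap.norm_map_of_mem_unitary hBu, hψ]) ?_
  rwa [← hA.adjoint_eq, ContinuousLinearMap.adjoint_inner_left]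

theorem norm_anticommutator_le_of_magic_square {X₁ X₂ Z₁ Z₂ W₁ W₂ X₃ X₄ Z₃ Z₄ W₃ W₄ : H →L[ℂ] H}
    (uX₁ : X₁ ∈ unitary (H →L[ℂ] H)) (uX₂ : X₂ ∈ unitary (H →L[ℂ] H))
    (uZ₁ : Z₁ ∈ unitary (H →L[ℂ] H)) (uW₁ : W₁ ∈ unitary (H →L[ℂ] H))
    (uX₃ : X₃ ∈ unitary (H →L[ℂ] H)) (uX₄ : X₄ ∈ unitary (H →L[ℂ] H))
    (uZ₃ : Z₃ ∈ unitary (H →L[ℂ] H)) (uW₃ : W₃ ∈ unitary (H →L[ℂ] H))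
    (cX₁X₄ : Commute X₁ X₄) (cX₁W₃ : Commute X₁ W₃)
    (cX₂X₃ : Commute X₂ X₃) (cX₂X₄ : Commute X₂ X₄) (cX₂Z₃ : Commute X₂ Z₃)
    (cX₂W₃ : Commute X₂ W₃) (cZ₁X₄ : Commute Z₁ X₄) (cZ₁Z₃ : Commute Z₁ Z₃)
    (cW₁X₄ : Commute W₁ X₄) (cW₁Z₃ : Commute W₁ Z₃) (cX₁X₂ : Commute X₁ X₂)
    {ψ : H} {δ : ℝ}
    (d₁ : dist (Z₁ ψ) (X₃ ψ) ≤ δ) (d₂ : dist (Z₂ ψ) (X₄ ψ) ≤ δ)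
    (d₃ : dist (X₁ ψ) (Z₃ ψ) ≤ δ) (d₄ : dist (X₂ ψ) (Z₄ ψ) ≤ δ)
    (d₅ : dist (Z₁ (Z₂ ψ)) (W₃ ψ) ≤ δ) (d₆ : dist (X₁ (X₂ ψ)) (W₄ ψ) ≤ δ)
    (d₇ : dist (W₁ ψ) (X₃ (Z₄ ψ)) ≤ δ) (d₈ : dist (W₂ ψ) (X₄ (Z₃ ψ)) ≤ δ)
    (d₉ : dist (W₁ (W₂ ψ)) (-W₃ (W₄ ψ)) ≤ δ) :
    ‖Z₁ (X₁ ψ) + X₁ (Z₁ ψ)‖ ≤ 9 * δ := by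
  have comm {P Q : H →L[ℂ] H} (h : Commute P Q) (x : H) : P (Q x) = Q (P x) :=
    congrArg (· x) h.eq
  have iso {U : H →L[ℂ] H} (hU : U ∈ unitary (H →L[ℂ] H)) := dist_map_of_mem_unitary hU
  have tri {x y z : H} {a b : ℝ} (hxy : dist x y ≤ a) (hyz : dist y z ≤ b) : dist x z ≤ a + b :=
    (dist_triangle x y z).trans (add_le_add hxy hyz)
  have s₁ : dist (X₂ (Z₁ (X₄ (X₁ ψ)))) (X₂ (Z₁ (X₄ (Z₃ ψ)))) ≤ δ := by
    rwa [iso uX₂, iso uZ₁, iso uX₄]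
  have s₂ : dist (X₂ (Z₁ (X₄ (Z₃ ψ)))) (X₂ (X₄ (Z₃ (X₃ ψ)))) ≤ δ := by
    rwa [comm cZ₁X₄, comm cZ₁Z₃, iso uX₂, iso uX₄, iso uZ₃]
  have s₃ : dist (X₂ (X₄ (Z₃ (X₃ ψ)))) (X₄ (Z₃ (X₃ (Z₄ ψ)))) ≤ δ := by
    rwa [comm cX₂X₄, comm cX₂Z₃, comm cX₂X₃, iso uX₄, iso uZ₃, iso uX₃]
  have s₄ : dist (X₄ (Z₃ (X₃ (Z₄ ψ)))) (X₄ (Z₃ (W₁ ψ))) ≤ δ := by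
    rwa [iso uX₄, iso uZ₃, dist_comm]
  have s₅ : dist (X₄ (Z₃ (W₁ ψ))) (W₁ (W₂ ψ)) ≤ δ := by
    rwa [← comm cW₁Z₃, ← comm cW₁X₄, iso uW₁, dist_comm]
  have s₇ : dist (-W₃ (W₄ ψ)) (-X₁ (X₂ (W₃ ψ))) ≤ δ := by
    rwa [comm cX₂W₃, comm cX₁W₃, dist_neg_neg, iso uW₃, dist_comm]
  have s₈ : dist (-X₁ (X₂ (W₃ ψ))) (-X₁ (X₂ (Z₁ (Z₂ ψ)))) ≤ δ := by
    rwa [dist_neg_neg, iso uX₁, iso uX₂, dist_comm]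
  have s₉ : dist (-X₁ (X₂ (Z₁ (Z₂ ψ)))) (-X₁ (X₂ (Z₁ (X₄ ψ)))) ≤ δ := by
    rwa [dist_neg_neg, iso uX₁, iso uX₂, iso uZ₁]
  have chain := tri s₁ <| tri s₂ <| tri s₃ <| tri s₄ <| tri s₅ <| tri d₉ <| tri s₇ <| tri s₈ s₉
  have ends : X₂ (X₄ (Z₁ (X₁ ψ) + X₁ (Z₁ ψ))) =
      X₂ (Z₁ (X₄ (X₁ ψ))) - -X₁ (X₂ (Z₁ (X₄ ψ))) := by
    rw [sub_neg_eq_add, map_add, map_add, comm cZ₁X₄, comm cX₁X₂, comm cZ₁X₄, comm cX₁X₄]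
  calc ‖Z₁ (X₁ ψ) + X₁ (Z₁ ψ)‖ = ‖X₂ (X₄ (Z₁ (X₁ ψ) + X₁ (Z₁ ψ)))‖ := by
        rw [ContinuousLinearMap.norm_map_of_mem_unitary uX₂,
          ContinuousLinearMap.norm_map_of_mem_unitary uX₄]
    _ ≤ 9 * δ := by rw [ends, ← dist_eq_norm]; linarith

end HilbertSpace

theorem stmt10_general {H : Type*} [NormedAddCommGroup H] [InnerProductSpace ℂ H] [CompleteSpace H]
    (X₁ X₂ Z₁ Z₂ W₁ W₂ X₃ X₄ Z₃ Z₄ W₃ W₄ : H →L[ℂ] H)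
    (hsa : ∀ P ∈ ([X₁, X₂, Z₁, Z₂, W₁, W₂, X₃, X₄, Z₃, Z₄, W₃, W₄] : List (H →L[ℂ] H)),
      ContinuousLinearMap.adjoint P = P ∧ P * P = 1)
    (hAB : ∀ P ∈ ([X₁, X₂, Z₁, Z₂, W₁, W₂] : List (H →L[ℂ] H)),
      ∀ Q ∈ ([X₃, X₄, Z₃, Z₄, W₃, W₄] : List (H →L[ℂ] H)), Commute P Q)
    (hXX : Commute X₁ X₂) (hZZ : Commute Z₁ Z₂) (hWW : Commute W₁ W₂)
    (ψ : H) (hψ : ‖ψ‖ = 1) (ε : ℝ)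
    (h1 : (⟪ψ, (Z₁ * X₃) ψ⟫_ℂ).re ≥ 1 - ε)
    (h2 : (⟪ψ, (Z₂ * X₄) ψ⟫_ℂ).re ≥ 1 - ε)
    (h3 : (⟪ψ, (X₁ * Z₃) ψ⟫_ℂ).re ≥ 1 - ε)
    (h4 : (⟪ψ, (X₂ * Z₄) ψ⟫_ℂ).re ≥ 1 - ε)
    (h5 : (⟪ψ, (Z₁ * Z₂ * W₃) ψ⟫_ℂ).re ≥ 1 - ε)
    (h6 : (⟪ψ, (X₁ * X₂ * W₄) ψ⟫_ℂ).re ≥ 1 - ε)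
    (h7 : (⟪ψ, (W₁ * X₃ * Z₄) ψ⟫_ℂ).re ≥ 1 - ε)
    (h8 : (⟪ψ, (W₂ * X₄ * Z₃) ψ⟫_ℂ).re ≥ 1 - ε)
    (h9 : -(⟪ψ, (W₁ * W₂ * W₃ * W₄) ψ⟫_ℂ).re ≥ 1 - ε) :
    ‖Z₁ (X₁ ψ) + X₁ (Z₁ ψ)‖ ≤ 9 * Real.sqrt (2 * ε) := by
  replace hsa := fun P hP => isSelfAdjoint_and_mem_unitary (hsa P hP)
  simp only [List.mem_cons, List.not_mem_nil, or_false, forall_eq_or_imp, forall_eq] at hsa hAB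
  obtain ⟨⟨sX₁, uX₁⟩, ⟨sX₂, uX₂⟩, ⟨sZ₁, uZ₁⟩, ⟨sZ₂, uZ₂⟩, ⟨sW₁, uW₁⟩, ⟨sW₂, uW₂⟩,
    ⟨-, uX₃⟩, ⟨-, uX₄⟩, ⟨-, uZ₃⟩, ⟨-, uZ₄⟩, ⟨-, uW₃⟩, ⟨-, uW₄⟩⟩ := hsa
  obtain ⟨⟨-, cX₁X₄, -, -, cX₁W₃, -⟩, ⟨cX₂X₃, cX₂X₄, cX₂Z₃, -, cX₂W₃, -⟩,
    ⟨-, cZ₁X₄, cZ₁Z₃, -, -, -⟩, -, ⟨-, cW₁X₄, cW₁Z₃, -, -, -⟩, -⟩ := hAB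
  have correlate := @dist_le_sqrt_of_one_sub_le_re_inner_mul _ _ _ _ ψ hψ ε
  refine norm_anticommutator_le_of_magic_square uX₁ uX₂ uZ₁ uW₁ uX₃ uX₄ uZ₃ uW₃
    cX₁X₄ cX₁W₃ cX₂X₃ cX₂X₄ cX₂Z₃ cX₂W₃ cZ₁X₄ cZ₁Z₃ cW₁X₄ cW₁Z₃ hXX
    (correlate sZ₁ uZ₁ uX₃ h1) (correlate sZ₂ uZ₂ uX₄ h2)
    (correlate sX₁ uX₁ uZ₃ h3) (correlate sX₂ uX₂ uZ₄ h4)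
    (correlate ((sZ₁.commute_iff sZ₂).1 hZZ) (mul_mem uZ₁ uZ₂) uW₃ h5)
    (correlate ((sX₁.commute_iff sX₂).1 hXX) (mul_mem uX₁ uX₂) uW₄ h6)
    (correlate sW₁ uW₁ (mul_mem uX₃ uZ₄) (by rwa [← mul_assoc]))
    (correlate sW₂ uW₂ (mul_mem uX₄ uZ₃) (by rwa [← mul_assoc]))
    (correlate ((sW₁.commute_iff sW₂).1 hWW) (mul_mem uW₁ uW₂)
      (neg_mem_unitary (mul_mem uW₃ uW₄))
      (by rwa [mul_neg, ← mul_assoc, neg_apply, inner_neg_right, Complex.neg_re]))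

/-- Robust magic-square relation: under the nine near-perfect magic-square
correlation conditions (each within ε of its ideal value 1) for self-adjoint
unitaries with the stated commutation relations (Alice-side operators, indices
1,2, commute with Bob-side operators, indices 3,4; this models the tensor
product structure), the bound ‖Z₁X₁ψ + X₁Z₁ψ‖ ≤ 9√(2ε) holds. -/
theorem stmt10 {H : Type*} [NormedAddCommGroup H] [InnerProductSpace ℂ H] [CompleteSpace H]
    (X₁ X₂ Z₁ Z₂ W₁ W₂ X₃ X₄ Z₃ Z₄ W₃ W₄ : H →L[ℂ] H)
    (hsa : ∀ P ∈ ([X₁, X₂, Z₁, Z₂, W₁, W₂, X₃, X₄, Z₃, Z₄, W₃, W₄] : List (H →L[ℂ] H)),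
      ContinuousLinearMap.adjoint P = P ∧ P * P = 1)
    (hAB : ∀ P ∈ ([X₁, X₂, Z₁, Z₂, W₁, W₂] : List (H →L[ℂ] H)),
      ∀ Q ∈ ([X₃, X₄, Z₃, Z₄, W₃, W₄] : List (H →L[ℂ] H)), Commute P Q)
    (hXX : Commute X₁ X₂) (hZZ : Commute Z₁ Z₂) (hWW : Commute W₁ W₂)
    (hZX : Commute Z₃ X₄) (hXZ : Commute X₃ Z₄) (hWW' : Commute W₃ W₄)
    (ψ : H) (hψ : ‖ψ‖ = 1) (ε : ℝ) (hε : 0 ≤ ε)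
    (h1 : (⟪ψ, (Z₁ * X₃) ψ⟫_ℂ).re ≥ 1 - ε)
    (h2 : (⟪ψ, (Z₂ * X₄) ψ⟫_ℂ).re ≥ 1 - ε)
    (h3 : (⟪ψ, (X₁ * Z₃) ψ⟫_ℂ).re ≥ 1 - ε)
    (h4 : (⟪ψ, (X₂ * Z₄) ψ⟫_ℂ).re ≥ 1 - ε)
    (h5 : (⟪ψ, (Z₁ * Z₂ * W₃) ψ⟫_ℂ).re ≥ 1 - ε)
    (h6 : (⟪ψ, (X₁ * X₂ * W₄) ψ⟫_ℂ).re ≥ 1 - ε)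
    (h7 : (⟪ψ, (W₁ * X₃ * Z₄) ψ⟫_ℂ).re ≥ 1 - ε)
    (h8 : (⟪ψ, (W₂ * X₄ * Z₃) ψ⟫_ℂ).re ≥ 1 - ε)
    (h9 : -(⟪ψ, (W₁ * W₂ * W₃ * W₄) ψ⟫_ℂ).re ≥ 1 - ε) :
    ‖Z₁ (X₁ ψ) + X₁ (Z₁ ψ)‖ ≤ 9 * Real.sqrt (2 * ε) :=
  stmt10_general X₁ X₂ Z₁ Z₂ W₁ W₂ X₃ X₄ Z₃ Z₄ W₃ W₄ hsa hAB hXX hZZ hWW ψ hψ ε h1 h2 h3 h4 h5 h6 h7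
    h8 h9
end

section
/- Under the same magic-square hypotheses (nine correlation conditions each within ε of their perfect values, with the stated commutation relations among self-adjoint unitaries), one has ‖Z₁X₂ψ − X₂Z₁ψ‖ ≤ 4√(2ε). -/
/-!
Each correlation `re ⟪ψ, P Q ψ⟫ ≥ 1 - ε` between self-adjoint unitaries says that `P ψ` and `Q ψ`
are unit vectors at distance at most `√(2ε)`: here `Z₁ ψ ≈ X₃ ψ` and `X₂ ψ ≈ Z₄ ψ`. Since the
operators on different sides commute, and `X₃` commutes with `Z₄`,
`Z₁ X₂ ψ ≈ Z₁ Z₄ ψ = Z₄ Z₁ ψ ≈ Z₄ X₃ ψ = X₃ Z₄ ψ ≈ X₃ X₂ ψ = X₂ X₃ ψ ≈ X₂ Z₁ ψ`,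
and each `≈` costs at most `√(2ε)` because the operator applied to the error is an isometry.
-/

open scoped InnerProductSpace

namespace ContinuousLinearMap

section Isometry

variable {R E : Type*} [Semiring R] [SeminormedAddCommGroup E] [Module R E]

theorem norm_commutator_apply_le {A B C D : E →L[R] E} (hA : ∀ x, ‖A x‖ = ‖x‖)
    (hB : ∀ x, ‖B x‖ = ‖x‖) (hC : ∀ x, ‖C x‖ = ‖x‖) (hD : ∀ x, ‖D x‖ = ‖x‖)
    (hAD : Commute A D) (hBC : Commute B C) (hCD : Commute C D) (ψ : E) :
    ‖A (B ψ) - B (A ψ)‖ ≤ 2 * (‖A ψ - C ψ‖ + ‖B ψ - D ψ‖) := by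
  have hAD' : A (D ψ) = D (A ψ) := DFunLike.congr_fun hAD.eq ψ
  have hBC' : B (C ψ) = C (B ψ) := DFunLike.congr_fun hBC.eq ψ
  have hCD' : C (D ψ) = D (C ψ) := DFunLike.congr_fun hCD.eq ψ
  calc ‖A (B ψ) - B (A ψ)‖
      = ‖A (B ψ - D ψ) + D (A ψ - C ψ) + C (D ψ - B ψ) + B (C ψ - A ψ)‖ := by
        simp only [map_sub, hAD', hBC', hCD']; abel_nf
    _ ≤ ‖A (B ψ - D ψ)‖ + ‖D (A ψ - C ψ)‖ + ‖C (D ψ - B ψ)‖ + ‖B (C ψ - A ψ)‖ :=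
        norm_add₄_le
    _ = 2 * (‖A ψ - C ψ‖ + ‖B ψ - D ψ‖) := by
        rw [hA, hB, hC, hD, norm_sub_rev (D ψ), norm_sub_rev (C ψ)]; ring

end Isometry

variable {𝕜 H : Type*} [RCLike 𝕜] [NormedAddCommGroup H] [InnerProductSpace 𝕜 H]
  [CompleteSpace H]

theorem norm_map_of_adjoint_eq_self_of_mul_self_eq_one {A : H →L[𝕜] H} (hsa : adjoint A = A)
    (hA : A * A = 1) (x : H) : ‖A x‖ = ‖x‖ :=
  A.norm_map_iff_adjoint_comp_self.mpr (by rw [hsa]; exact hA) x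

theorem norm_apply_sub_apply_le_of_one_sub_le_re_inner {A B : H →L[𝕜] H} (hsa : adjoint A = A)
    (hA : ∀ x, ‖A x‖ = ‖x‖) (hB : ∀ x, ‖B x‖ = ‖x‖) {ψ : H} (hψ : ‖ψ‖ = 1) {ε : ℝ}
    (h : 1 - ε ≤ RCLike.re ⟪ψ, (A * B) ψ⟫_𝕜) : ‖A ψ - B ψ‖ ≤ √(2 * ε) := by
  have hre : 1 - ε ≤ RCLike.re ⟪A ψ, B ψ⟫_𝕜 := by
    rwa [← hsa, adjoint_inner_left]
  rw [← Real.sqrt_sq (norm_nonneg _)]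
  refine Real.sqrt_le_sqrt ?_
  rw [norm_sub_sq (𝕜 := 𝕜), hA, hB, hψ]
  linarith

end ContinuousLinearMap

open ContinuousLinearMap in
theorem stmt11_general {H : Type*} [NormedAddCommGroup H] [InnerProductSpace ℂ H] [CompleteSpace H]
    (X₁ X₂ Z₁ Z₂ W₁ W₂ X₃ X₄ Z₃ Z₄ W₃ W₄ : H →L[ℂ] H)
    (hsa : ∀ P ∈ ([X₁, X₂, Z₁, Z₂, W₁, W₂, X₃, X₄, Z₃, Z₄, W₃, W₄] : List (H →L[ℂ] H)),
      ContinuousLinearMap.adjoint P = P ∧ P * P = 1)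
    (hAB : ∀ P ∈ ([X₁, X₂, Z₁, Z₂, W₁, W₂] : List (H →L[ℂ] H)),
      ∀ Q ∈ ([X₃, X₄, Z₃, Z₄, W₃, W₄] : List (H →L[ℂ] H)), Commute P Q)
    (hXZ : Commute X₃ Z₄)
    (ψ : H) (hψ : ‖ψ‖ = 1) (ε : ℝ)
    (h1 : (⟪ψ, (Z₁ * X₃) ψ⟫_ℂ).re ≥ 1 - ε)
    (h4 : (⟪ψ, (X₂ * Z₄) ψ⟫_ℂ).re ≥ 1 - ε) :
    ‖Z₁ (X₂ ψ) - X₂ (Z₁ ψ)‖ ≤ 4 * Real.sqrt (2 * ε) := by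
  have hunitary {P : H →L[ℂ] H} (hP : P ∈ [X₁, X₂, Z₁, Z₂, W₁, W₂, X₃, X₄, Z₃, Z₄, W₃, W₄]) :
      adjoint P = P ∧ ∀ x, ‖P x‖ = ‖x‖ :=
    ⟨(hsa P hP).1, norm_map_of_adjoint_eq_self_of_mul_self_eq_one (hsa P hP).1 (hsa P hP).2⟩
  obtain ⟨hZ₁, iZ₁⟩ := hunitary (P := Z₁) (by simp)
  obtain ⟨hX₂, iX₂⟩ := hunitary (P := X₂) (by simp)
  have iX₃ := (hunitary (P := X₃) (by simp)).2
  have iZ₄ := (hunitary (P := Z₄) (by simp)).2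
  calc ‖Z₁ (X₂ ψ) - X₂ (Z₁ ψ)‖ ≤ 2 * (‖Z₁ ψ - X₃ ψ‖ + ‖X₂ ψ - Z₄ ψ‖) :=
        norm_commutator_apply_le iZ₁ iX₂ iX₃ iZ₄ (hAB Z₁ (by simp) Z₄ (by simp))
          (hAB X₂ (by simp) X₃ (by simp)) hXZ ψ
    _ ≤ 2 * (√(2 * ε) + √(2 * ε)) := by
        gcongr
        exacts [norm_apply_sub_apply_le_of_one_sub_le_re_inner hZ₁ iZ₁ iX₃ hψ h1,
          norm_apply_sub_apply_le_of_one_sub_le_re_inner hX₂ iX₂ iZ₄ hψ h4]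
    _ = 4 * √(2 * ε) := by ring

/-- Robust magic-square relation: under the nine near-perfect magic-square
correlation conditions (each within ε of its ideal value 1) for self-adjoint
unitaries with the stated commutation relations (Alice-side operators, indices
1,2, commute with Bob-side operators, indices 3,4; this models the tensor
product structure), the bound ‖Z₁X₂ψ − X₂Z₁ψ‖ ≤ 4√(2ε) holds. -/
theorem stmt11 {H : Type*} [NormedAddCommGroup H] [InnerProductSpace ℂ H] [CompleteSpace H]
    (X₁ X₂ Z₁ Z₂ W₁ W₂ X₃ X₄ Z₃ Z₄ W₃ W₄ : H →L[ℂ] H)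
    (hsa : ∀ P ∈ ([X₁, X₂, Z₁, Z₂, W₁, W₂, X₃, X₄, Z₃, Z₄, W₃, W₄] : List (H →L[ℂ] H)),
      ContinuousLinearMap.adjoint P = P ∧ P * P = 1)
    (hAB : ∀ P ∈ ([X₁, X₂, Z₁, Z₂, W₁, W₂] : List (H →L[ℂ] H)),
      ∀ Q ∈ ([X₃, X₄, Z₃, Z₄, W₃, W₄] : List (H →L[ℂ] H)), Commute P Q)
    (hXX : Commute X₁ X₂) (hZZ : Commute Z₁ Z₂) (hWW : Commute W₁ W₂)
    (hZX : Commute Z₃ X₄) (hXZ : Commute X₃ Z₄) (hWW' : Commute W₃ W₄)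
    (ψ : H) (hψ : ‖ψ‖ = 1) (ε : ℝ) (hε : 0 ≤ ε)
    (h1 : (⟪ψ, (Z₁ * X₃) ψ⟫_ℂ).re ≥ 1 - ε)
    (h2 : (⟪ψ, (Z₂ * X₄) ψ⟫_ℂ).re ≥ 1 - ε)
    (h3 : (⟪ψ, (X₁ * Z₃) ψ⟫_ℂ).re ≥ 1 - ε)
    (h4 : (⟪ψ, (X₂ * Z₄) ψ⟫_ℂ).re ≥ 1 - ε)
    (h5 : (⟪ψ, (Z₁ * Z₂ * W₃) ψ⟫_ℂ).re ≥ 1 - ε)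
    (h6 : (⟪ψ, (X₁ * X₂ * W₄) ψ⟫_ℂ).re ≥ 1 - ε)
    (h7 : (⟪ψ, (W₁ * X₃ * Z₄) ψ⟫_ℂ).re ≥ 1 - ε)
    (h8 : (⟪ψ, (W₂ * X₄ * Z₃) ψ⟫_ℂ).re ≥ 1 - ε)
    (h9 : -(⟪ψ, (W₁ * W₂ * W₃ * W₄) ψ⟫_ℂ).re ≥ 1 - ε) :
    ‖Z₁ (X₂ ψ) - X₂ (Z₁ ψ)‖ ≤ 4 * Real.sqrt (2 * ε) :=
  stmt11_general X₁ X₂ Z₁ Z₂ W₁ W₂ X₃ X₄ Z₃ Z₄ W₃ W₄ hsa hAB hXZ ψ hψ ε h1 h4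
end
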